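/- If F is a closed subset of M_T(X), then the set X(F) = ∪{B(μ) : μ ∈ F} of points whose empirical measures converge to some measure in F is a Borel subset of X. -/

import Mathlib

open MeasureTheory Filter Topology
open scoped ENNReal NNReal

/-- The empirical measure `δ_{x,n+1} = (δ_x + δ_{Tx} + ⋯ + δ_{Tⁿx})/(n+1)`. -/
noncomputable def emp {X : Type*} [MeasurableSpace X] (T : X → X) (x : X) (n : ℕ) :
    ProbabilityMeasure X :=
  ⟨((n + 1 : ℝ≥0∞))⁻¹ • ∑ i ∈ Finset.range (n + 1), Measure.dirac (T^[i] x), by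
    constructor
    simp [Measure.smul_apply, Measure.finset_sum_apply, ENNReal.inv_mul_cancel,
      (Nat.cast_add_one_ne_zero n)]⟩

/-!
For a compact metric space `X` the space of probability measures is compact and metrizable,
hence Polish, and each `x ↦ δ_{x,n}` is continuous. For measurable maps into a Polish space the
set of points where they converge is measurable and the limit is measurable on it, so the points
whose limit lies in the closed set `F` form a measurable set.
-/

open TopologicalSpace
open scoped BoundedContinuousFunction

theorem PolishSpace.of_compactSpace (α : Type*) [TopologicalSpace α] [CompactSpace α]
    [MetrizableSpace α] : PolishSpace α := by
  let := metrizableSpaceMetric α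
  infer_instance

theorem measurableSet_exists_mem_tendsto {ι β Y : Type*} [MeasurableSpace β]
    [TopologicalSpace Y] [PolishSpace Y] [MeasurableSpace Y] [BorelSpace Y] [Countable ι]
    {l : Filter ι} [l.NeBot] [l.IsCountablyGenerated] {f : ι → β → Y}
    (hf : ∀ i, Measurable (f i)) {F : Set Y} (hF : IsClosed F) :
    MeasurableSet {x | ∃ c ∈ F, Tendsto (fun i => f i x) l (𝓝 c)} := by
  let S := {x | ∃ c, Tendsto (fun i => f i x) l (𝓝 c)}
  let g : S → Y := fun x => x.2.choose
  have hg : Measurable g :=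
    measurable_of_tendsto_metrizable' l (fun i => (hf i).comp measurable_subtype_coe)
      (tendsto_pi_nhds.2 fun x => x.2.choose_spec)
  have hset : {x | ∃ c ∈ F, Tendsto (fun i => f i x) l (𝓝 c)} = Subtype.val '' (g ⁻¹' F) := by
    ext x
    constructor
    · rintro ⟨c, hcF, hc⟩
      have hx : x ∈ S := ⟨c, hc⟩
      refine ⟨⟨x, hx⟩, ?_, rfl⟩
      change hx.choose ∈ F
      rwa [tendsto_nhds_unique hx.choose_spec hc]
    · rintro ⟨⟨x, hx⟩, hgx, rfl⟩
      exact ⟨g ⟨x, hx⟩, hgx, hx.choose_spec⟩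
  rw [hset]
  exact (measurableSet_exists_tendsto hf).subtype_image (hF.measurableSet.preimage hg)

section Empirical

variable {X : Type*} [MeasurableSpace X] [TopologicalSpace X] [OpensMeasurableSpace X]

theorem lintegral_emp (T : X → X) (x : X) (n : ℕ) (f : X →ᵇ ℝ≥0) :
    ∫⁻ y, f y ∂(emp T x n : Measure X)
      = ((n + 1 : ℝ≥0∞))⁻¹ * ∑ i ∈ Finset.range (n + 1), (f (T^[i] x) : ℝ≥0∞) := by
  have hf : Measurable fun y => (f y : ℝ≥0∞) :=
    (ENNReal.continuous_coe.comp f.continuous).measurable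
  change ∫⁻ y, f y ∂(((n + 1 : ℝ≥0∞))⁻¹ • ∑ i ∈ Finset.range (n + 1), Measure.dirac (T^[i] x))
    = _
  rw [lintegral_smul_measure, lintegral_finsetSum_measure]
  simp only [lintegral_dirac' _ hf, smul_eq_mul]

theorem continuous_emp {T : X → X} (hT : Continuous T) (n : ℕ) :
    Continuous fun x => emp T x n := by
  refine continuous_iff_continuousAt.2 fun x => ?_
  rw [ContinuousAt, ProbabilityMeasure.tendsto_iff_forall_lintegral_tendsto]
  intro f
  simp only [lintegral_emp]
  refine ENNReal.Tendsto.const_mul ?_ (Or.inr (by simp))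
  refine tendsto_finsetSum _ fun i _ => ?_
  exact (ENNReal.continuous_coe.comp (f.continuous.comp (hT.iterate i))).tendsto x

end Empirical

theorem basin_union_closed_borel_general {X : Type*} [MetricSpace X] [CompactSpace X]
    [MeasurableSpace X] [BorelSpace X] (T : X → X) (hT : Continuous T)
    (F : Set (ProbabilityMeasure X)) (hF : IsClosed F) :
    MeasurableSet {x : X | ∃ μ ∈ F, Tendsto (fun n => emp T x n) atTop (𝓝 μ)} := by
  borelize (ProbabilityMeasure X)
  have := PolishSpace.of_compactSpace (ProbabilityMeasure X)
  exact measurableSet_exists_mem_tendsto (fun n => (continuous_emp hT n).measurable) hF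

/-- If F is a closed set of invariant measures, then X(F) = ∪{B(μ) : μ ∈ F}
is Borel. -/
theorem basin_union_closed_borel {X : Type*} [MetricSpace X] [CompactSpace X]
    [MeasurableSpace X] [BorelSpace X] (T : X → X) (hT : Continuous T)
    (F : Set (ProbabilityMeasure X)) (hF : IsClosed F)
    (hFinv : ∀ μ ∈ F, (μ : Measure X).map T = μ) :
    MeasurableSet {x : X | ∃ μ ∈ F, Tendsto (fun n => emp T x n) atTop (𝓝 μ)} :=
  basin_union_closed_borel_general T hT F hF
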